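/- arXiv:math/0505250 — 5 statements merged into one kernel-verified Lean document; each statement's English description precedes it below -/
import Mathlib

section
/- Let S₁, S₂, S₃, … be a sequence of isometries on a Hilbert space H such that Sᵢ*Sⱼ = 0 for i ≠ j and Σᵢ SᵢSᵢ* = 1 (strong convergence). Fix n ≥ 1 and define Wᵢ = Σⱼ S_{i+jn} Sⱼ* (strong convergence) for i = 1, …, n. Then W₁, …, Wₙ are isometries with Wᵢ*Wⱼ = 0 for i ≠ j and Σᵢ₌₁ⁿ WᵢWᵢ* = 1. Moreover, each Wᵢ commutes with every operator of the form Σₖ Sₖ T Sₖ* for T ∈ B(H). -/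
open ContinuousLinearMap

/-!
Testing the defining series of `Wᵢ` on the range of `Sⱼ` and using `Sₖ*Sⱼ = δₖⱼ` gives
`Wᵢ Sⱼ = S_{e(i,j)}` with `e(i,j) = i + jn`. Since `Σ SⱼSⱼ* = 1`, an operator is determined by its products `A Sⱼ`, and
also by the matrix `Sₖ* A Sⱼ`. In these terms `Sₘ*Wᵢ*WₗSⱼ = S_{e(i,m)}*S_{e(l,j)}`, which gives the
Cuntz relations for the `Wᵢ` because `e` is injective; `Σᵢ WᵢWᵢ* = 1` holds because `e` is onto;
and an amplification `B` with `B Sⱼ = Sⱼ T` commutes with `Wᵢ` because `Wᵢ` merely relabels the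
`Sⱼ`.
-/

section CuntzFamily

variable {𝕜 H ι κ : Type*} [RCLike 𝕜] [NormedAddCommGroup H] [InnerProductSpace 𝕜 H]
  [CompleteSpace H] {S : ι → H →L[𝕜] H}

theorem adjoint_comp_eq_ite [DecidableEq ι] (hiso : ∀ i, adjoint (S i) ∘L S i = 1)
    (horth : Pairwise fun i j => adjoint (S i) ∘L S j = 0) (i j : ι) :
    adjoint (S i) ∘L S j = if i = j then 1 else 0 := by
  split_ifs with h
  · exact h ▸ hiso i
  · exact horth h

theorem comp_eq_of_hasSum_adjoint (hiso : ∀ i, adjoint (S i) ∘L S i = 1)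
    (horth : Pairwise fun i j => adjoint (S i) ∘L S j = 0) {B : H →L[𝕜] H}
    {X : ι → H →L[𝕜] H} (hB : ∀ ξ, HasSum (fun k => X k (adjoint (S k) ξ)) (B ξ)) (j : ι) :
    B ∘L S j = X j := by
  classical
  ext ζ
  have hterms : (fun k => X k (adjoint (S k) (S j ζ))) = fun k => if k = j then X j ζ else 0 := by
    funext k
    rw [← comp_apply (adjoint (S k)), adjoint_comp_eq_ite hiso horth]
    split_ifs with hkj
    · rw [hkj, one_apply_eq_self]
    · rw [zero_apply, map_zero]
  exact (hB (S j ζ)).unique (hterms ▸ hasSum_ite_eq j _)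

theorem ext_of_comp_eq (hsum : ∀ ξ, HasSum (fun i => S i (adjoint (S i) ξ)) ξ)
    {A B : H →L[𝕜] H} (h : ∀ j, A ∘L S j = B ∘L S j) : A = B := by
  ext ξ
  have hterms : (fun i => A (S i (adjoint (S i) ξ))) = fun i => B (S i (adjoint (S i) ξ)) :=
    funext fun i => congr($(h i) (adjoint (S i) ξ))
  exact (A.hasSum (hsum ξ)).unique (hterms ▸ B.hasSum (hsum ξ))

theorem ext_of_adjoint_comp_eq (hsum : ∀ ξ, HasSum (fun i => S i (adjoint (S i) ξ)) ξ)
    {A B : H →L[𝕜] H} (h : ∀ i, adjoint (S i) ∘L A = adjoint (S i) ∘L B) : A = B := by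
  refine adjoint.injective (ext_of_comp_eq hsum fun i => ?_)
  rw [← adjoint_adjoint (S i), ← adjoint_comp, ← adjoint_comp, h]

theorem comp_comm_of_comp_eq (hsum : ∀ ξ, HasSum (fun i => S i (adjoint (S i) ξ)) ξ)
    {W B T : H →L[𝕜] H} {e : ι → ι} (hWS : ∀ j, W ∘L S j = S (e j))
    (hB : ∀ j, B ∘L S j = S j ∘L T) : W ∘L B = B ∘L W :=
  ext_of_comp_eq hsum fun j => by
    rw [comp_assoc, hB, ← comp_assoc, hWS, ← hB, comp_assoc, hWS]

theorem adjoint_comp_eq_ite_of_comp_eq [DecidableEq κ] (hiso : ∀ i, adjoint (S i) ∘L S i = 1)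
    (horth : Pairwise fun i j => adjoint (S i) ∘L S j = 0)
    (hsum : ∀ ξ, HasSum (fun i => S i (adjoint (S i) ξ)) ξ) {W : κ → H →L[𝕜] H}
    {e : κ × ι → ι} (he : Function.Injective e) (hWS : ∀ k j, W k ∘L S j = S (e (k, j)))
    (k l : κ) : adjoint (W k) ∘L W l = if k = l then 1 else 0 := by
  classical
  refine ext_of_comp_eq hsum fun j => ext_of_adjoint_comp_eq hsum fun m => ?_
  have hadj : adjoint (S m) ∘L adjoint (W k) = adjoint (S (e (k, m))) := by
    rw [← adjoint_comp, hWS]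
  rw [comp_assoc, hWS, ← comp_assoc, hadj, adjoint_comp_eq_ite hiso horth, he.eq_iff]
  by_cases hkl : k = l <;> simp [hkl, one_def, adjoint_comp_eq_ite hiso horth]

theorem sum_comp_adjoint_eq_one [Fintype κ] (hiso : ∀ i, adjoint (S i) ∘L S i = 1)
    (horth : Pairwise fun i j => adjoint (S i) ∘L S j = 0)
    (hsum : ∀ ξ, HasSum (fun i => S i (adjoint (S i) ξ)) ξ) {W : κ → H →L[𝕜] H}
    (e : κ × ι ≃ ι) (hWS : ∀ k j, W k ∘L S j = S (e (k, j))) :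
    ∑ k, W k ∘L adjoint (W k) = 1 := by
  classical
  refine ext_of_comp_eq hsum fun m => ?_
  obtain ⟨⟨l, j⟩, rfl⟩ := e.surjective m
  calc (∑ k, W k ∘L adjoint (W k)) ∘L S (e (l, j))
    _ = ∑ k, W k ∘L (adjoint (W k) ∘L W l) ∘L S j := by
      simp only [finsetSum_comp, comp_assoc, hWS]
    _ = 1 ∘L S (e (l, j)) := by
      simp only [adjoint_comp_eq_ite_of_comp_eq hiso horth hsum e.injective hWS]
      rw [Finset.sum_eq_single_of_mem l (Finset.mem_univ l) fun k _ hk => by simp [hk], ← hWS]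
      simp [one_def]

end CuntzFamily

/-- Given a sequence of isometries `Sᵢ` on a Hilbert space with pairwise
orthogonal ranges summing strongly to `1`, and `n ≥ 1`, the operators
`Wᵢ = Σⱼ S_{i+jn} Sⱼ*` (`i = 0, …, n-1`, strong convergence) form a finite family of
isometries with pairwise orthogonal ranges summing to `1`, each commuting with every
operator of the form `Σₖ Sₖ T Sₖ*`. -/
theorem stmt3 (H : Type*) [NormedAddCommGroup H] [InnerProductSpace ℂ H] [CompleteSpace H]
    (S : ℕ → H →L[ℂ] H)
    (hiso : ∀ i, adjoint (S i) ∘L S i = 1)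
    (horth : ∀ i j, i ≠ j → adjoint (S i) ∘L S j = 0)
    (hsum : ∀ ξ : H, HasSum (fun i => S i (adjoint (S i) ξ)) ξ)
    (n : ℕ) (hn : 1 ≤ n)
    (W : Fin n → H →L[ℂ] H)
    (hW : ∀ (i : Fin n) (ξ : H),
      HasSum (fun j : ℕ => S ((i : ℕ) + j * n) (adjoint (S j) ξ)) (W i ξ)) :
    (∀ i, adjoint (W i) ∘L W i = 1) ∧
    (∀ i j, i ≠ j → adjoint (W i) ∘L W j = 0) ∧
    (∀ ξ : H, ∑ i : Fin n, W i (adjoint (W i) ξ) = ξ) ∧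
    (∀ T B : H →L[ℂ] H,
      (∀ ξ : H, HasSum (fun k => S k (T (adjoint (S k) ξ))) (B ξ)) →
      ∀ i, W i ∘L B = B ∘L W i) := by
  have : NeZero n := ⟨by omega⟩
  have hWS (i : Fin n) (j : ℕ) : W i ∘L S j = S (i + j * n) :=
    comp_eq_of_hasSum_adjoint hiso horth (hW i) j
  let e : Fin n × ℕ ≃ ℕ := (Equiv.prodComm _ _).trans (Nat.divModEquiv n).symm
  have hWSe : ∀ i j, W i ∘L S j = S (e (i, j)) := fun i j => by
    simp [e, hWS, add_comm]
  have hWW := adjoint_comp_eq_ite_of_comp_eq hiso horth hsum e.injective hWSe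
  refine ⟨fun i => by simpa using hWW i i, fun i j hij => by simpa [hij] using hWW i j,
    fun ξ => ?_, fun T B hB i => ?_⟩
  · simpa using congr($(sum_comp_adjoint_eq_one hiso horth hsum e hWSe) ξ)
  · exact comp_comm_of_comp_eq hsum (hWS i)
      (comp_eq_of_hasSum_adjoint hiso horth (X := fun k => S k ∘L T) hB)
end

section
/- Let Y be a compact metric space with trivial reduced K-theory (K̃⁰(Y) = 0) and with Ext(K¹(Y), ℤ) = 0, and let X be a compact metric space with a continuous surjection f : X → Y. Then the induced map f₊ : K₀(X) → K₀(Y) on K-homology is surjective. -/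
/-!
A class `c ∈ K₀(Y)` is determined by its index pairing `γY c : K⁰(Y) → ℤ`, by the UCT with
`Ext(K¹(Y), ℤ) = 0`; since `K⁰(Y) ≅ C(Y, ℤ)`, this pairing is a homomorphism `C(Y, ℤ) → ℤ`.
The pullback `f^* : C(Y, ℤ) → C(X, ℤ)` is a split injection: its cokernel embeds, via
`g ↦ g ∘ pr₁ - g ∘ pr₂`, into `C(X ×_Y X, ℤ)`, which is free by Nöbeling's theorem, and subgroups
of free abelian groups are free. Composing the pairing with a retraction of `f^*` and with the rank
map `K⁰(X) → C(X, ℤ)` gives a homomorphism `K⁰(X) → ℤ`, which by surjectivity of `γX` is the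
pairing of some class in `K₀(X)`; naturality of the pairing shows that this class maps to `c`.
-/

/-- `Ext(G, ℤ) = 0` for an abelian group `G`: every extension of `G` by `ℤ` splits,
i.e. every surjection onto `G` with kernel a copy of `ℤ` admits a section. -/
def HasTrivialExtZ (G : Type) [AddCommGroup G] : Prop :=
  ∀ (E : Type) [AddCommGroup E], ∀ (i : ℤ →+ E) (p : E →+ G),
    Function.Injective i → Function.Surjective p →
    (∀ e : E, p e = 0 ↔ e ∈ i.range) →
    ∃ s : G →+ E, p.comp s = AddMonoidHom.id G

open Function Submodule

section FreeSubmodule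

open Finsupp

variable {R : Type*} [CommRing R]

theorem Finsupp.linearIndependent_of_mem_supported_Iic [IsDomain R] {I : Type*} [LinearOrder I]
    (v : I → I →₀ R) (hv : ∀ i, v i ∈ supported R R (Set.Iic i)) :
    LinearIndependent R (fun j : {i // v i i ≠ 0} ↦ v j) := by
  classical
  rw [linearIndependent_iff']
  intro s g hsum j hj
  by_contra hgj
  set t := s.filter (g · ≠ 0)
  have ht : t.Nonempty := ⟨j, Finset.mem_filter.2 ⟨hj, hgj⟩⟩
  set m := t.max' ht
  obtain ⟨hms, hgm⟩ := Finset.mem_filter.1 (t.max'_mem ht)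
  have hvanish : ∀ k ∈ s, k ≠ m → g k * v k m = 0 := by
    intro k hk hkm
    by_cases hgk : g k = 0
    · simp [hgk]
    have hlt : k.1 < m.1 := lt_of_le_of_ne (t.le_max' k (Finset.mem_filter.2 ⟨hk, hgk⟩))
      (Subtype.coe_injective.ne hkm)
    have : v k m = 0 := by
      by_contra h
      exact not_le.2 hlt ((mem_supported R _).1 (hv k) (mem_support_iff.2 h))
    rw [this, mul_zero]
  have hm := congrArg (· m.1) hsum
  simp only [finsetSum_apply, smul_apply, smul_eq_mul, coe_zero, Pi.zero_apply] at hm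
  rw [Finset.sum_eq_single_of_mem m hms hvanish] at hm
  exact (mul_ne_zero hgm m.2) hm

theorem Finsupp.mem_span_of_dvd_leading {I : Type*} [LinearOrder I] [WellFoundedLT I]
    (N : Submodule R (I →₀ R)) (e : I → I →₀ R)
    (he : ∀ i, e i ∈ N ⊓ supported R R (Set.Iic i))
    (hdvd : ∀ i, ∀ x ∈ N ⊓ supported R R (Set.Iic i), e i i ∣ x i) {x : I →₀ R}
    (hx : x ∈ N) : x ∈ span R (Set.range fun j : {i // e i i ≠ 0} ↦ e j) := by
  classical
  induction hmax : x.support.max using WellFoundedLT.induction generalizing x with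
  | ind b IH =>
  induction b using WithBot.recBotCoe with
  | bot => simp [support_eq_empty.1 (Finset.max_eq_bot.1 hmax)]
  | coe m =>
  have hxm : x ∈ supported R R (Set.Iic m) :=
    (mem_supported R x).2 fun k hk ↦ Finset.le_max_of_eq hk hmax
  obtain ⟨c, hc⟩ := hdvd m x ⟨hx, hxm⟩
  have hem : e m m ≠ 0 := by
    rintro h
    rw [h, zero_mul] at hc
    exact mem_support_iff.1 (Finset.mem_of_max hmax) hc
  set y := x - c • e m
  have hy : y ∈ N := N.sub_mem hx (N.smul_mem c (he m).1)
  have hylt : y.support.max < m := by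
    rw [Finset.max_eq_sup_withBot, Finset.sup_lt_iff (WithBot.bot_lt_coe m)]
    intro k hk
    have hkm : k ≤ m :=
      (mem_supported R y).1 (sub_mem hxm (smul_mem _ c (he m).2)) hk
    refine WithBot.coe_lt_coe.2 (lt_of_le_of_ne hkm ?_)
    rintro rfl
    simp [y, hc, mul_comm] at hk
  rw [← sub_add_cancel x (c • e m)]
  exact add_mem (IH _ hylt hy rfl) (smul_mem _ c (subset_span ⟨⟨m, hem⟩, rfl⟩))

variable [IsDomain R] [IsPrincipalIdealRing R]

theorem Finsupp.free_submodule {I : Type*} [LinearOrder I] [WellFoundedLT I]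
    (N : Submodule R (I →₀ R)) : Module.Free R N := by
  have hlead : ∀ i, ∃ x ∈ N ⊓ supported R R (Set.Iic i),
      x i = IsPrincipal.generator ((N ⊓ supported R R (Set.Iic i)).map (lapply i)) :=
    fun i ↦ mem_map.1 (IsPrincipal.generator_mem (map (lapply i) _))
  choose e he heq using hlead
  have hdvd : ∀ i, ∀ x ∈ N ⊓ supported R R (Set.Iic i), e i i ∣ x i := fun i x hx ↦ by
    rw [heq, ← IsPrincipal.mem_iff_generator_dvd]
    exact mem_map_of_mem hx
  have hspan : span R (Set.range fun j : {i // e i i ≠ 0} ↦ e j) = N :=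
    le_antisymm (span_le.2 (Set.range_subset_iff.2 fun j ↦ (he j).1))
      fun x hx ↦ mem_span_of_dvd_leading N e he hdvd hx
  have := Module.Free.of_basis
    (Module.Basis.span (linearIndependent_of_mem_supported_Iic e fun i ↦ (he i).2))
  exact Module.Free.of_equiv (LinearEquiv.ofEq _ _ hspan)

theorem Module.free_of_injective {M F : Type*} [AddCommGroup M] [Module R M] [AddCommGroup F]
    [Module R F] [Module.Free R F] (g : M →ₗ[R] F) (hg : Function.Injective g) :
    Module.Free R M := by
  obtain ⟨_, _⟩ := exists_wellFoundedLT (Module.Free.ChooseBasisIndex R F)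
  let b := Module.Free.chooseBasis R F
  have := Finsupp.free_submodule (LinearMap.range (b.repr.toLinearMap ∘ₗ g))
  exact Module.Free.of_equiv
    (LinearEquiv.ofInjective (b.repr.toLinearMap ∘ₗ g) (b.repr.injective.comp hg)).symm

end FreeSubmodule

theorem LinearMap.exists_leftInverse_of_projective_quotient {R A B : Type*} [Ring R]
    [AddCommGroup A] [Module R A] [AddCommGroup B] [Module R B] (j : A →ₗ[R] B)
    (hj : Injective j) [Module.Projective R (B ⧸ range j)] :
    ∃ r : B →ₗ[R] A, r ∘ₗ j = id := by
  obtain ⟨s, hs⟩ := Module.projective_lifting_property (range j).mkQ id (mkQ_surjective _)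
  have hsplit := ((exact_map_mkQ_range j).split_tfae hj (mkQ_surjective _)).out 0 1
  exact hsplit.mp ⟨s, hs⟩

namespace ContinuousMap

def toLocallyConstantConnectedComponents (P Z : Type*) [TopologicalSpace P]
    [AddCommGroup Z] [TopologicalSpace Z] [DiscreteTopology Z] :
    C(P, Z) →+ LocallyConstant (ConnectedComponents P) Z where
  toFun g := ⟨g.continuous.connectedComponentsLift,
    (IsLocallyConstant.iff_continuous _).2 g.continuous.connectedComponentsLift_continuous⟩
  map_zero' := LocallyConstant.ext <| ConnectedComponents.surjective_coe.forall.2 fun _ ↦ rfl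
  map_add' _ _ := LocallyConstant.ext <| ConnectedComponents.surjective_coe.forall.2 fun _ ↦ rfl

theorem toLocallyConstantConnectedComponents_injective (P Z : Type*)
    [TopologicalSpace P] [AddCommGroup Z] [TopologicalSpace Z] [DiscreteTopology Z] :
    Injective (toLocallyConstantConnectedComponents P Z) := fun _ _ h ↦
  ContinuousMap.ext fun p ↦ congrArg (· (ConnectedComponents.mk p)) h

theorem free_int (P : Type*) [TopologicalSpace P] [CompactSpace P] [T2Space P] :
    Module.Free ℤ C(P, ℤ) :=
  have := LocallyConstant.freeOfProfinite (Profinite.of (ConnectedComponents P))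
  Module.free_of_injective (toLocallyConstantConnectedComponents P ℤ).toIntLinearMap
    (toLocallyConstantConnectedComponents_injective P ℤ)

variable {X Y : Type*} [TopologicalSpace X] [TopologicalSpace Y] (f : C(X, Y))

abbrev KernelPair : Type _ := {p : X × X // f p.1 = f p.2}

def kernelPairFst : C(f.KernelPair, X) := ⟨fun p ↦ p.1.1, by fun_prop⟩

def kernelPairSnd : C(f.KernelPair, X) := ⟨fun p ↦ p.1.2, by fun_prop⟩

theorem ker_sub_compRight_kernelPair {f : C(X, Y)} (hf : Topology.IsQuotientMap f) :
    LinearMap.ker ((compRightAlgHom ℤ ℤ f.kernelPairFst).toLinearMap -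
      (compRightAlgHom ℤ ℤ f.kernelPairSnd).toLinearMap) =
      LinearMap.range (compRightAlgHom ℤ ℤ f).toLinearMap := by
  ext g
  simp only [LinearMap.mem_ker, LinearMap.mem_range, LinearMap.sub_apply,
    AlgHom.toLinearMap_apply, compRightAlgHom_apply, sub_eq_zero]
  constructor
  · intro hg
    exact ⟨hf.lift g fun a b hab ↦ DFunLike.congr_fun hg ⟨(a, b), hab⟩, hf.lift_comp g _⟩
  · rintro ⟨h, rfl⟩
    ext p
    exact congrArg h p.2

theorem exists_leftInverse_compRight [CompactSpace X] [T2Space X] [T2Space Y] {f : C(X, Y)}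
    (hf : Surjective f) :
    ∃ r : C(X, ℤ) →ₗ[ℤ] C(Y, ℤ), r ∘ₗ (compRightAlgHom ℤ ℤ f).toLinearMap = LinearMap.id := by
  have hker := ker_sub_compRight_kernelPair (f.continuous.isClosedMap.isQuotientMap f.continuous hf)
  have : CompactSpace f.KernelPair := isCompact_iff_compactSpace.1
    (isClosed_eq (by fun_prop) (by fun_prop) : IsClosed {p : X × X | f p.1 = f p.2}).isCompact
  have := free_int f.KernelPair
  have := Module.free_of_injective (liftQ _ _ hker.ge)
    (LinearMap.ker_eq_bot.1 (ker_liftQ_eq_bot _ _ _ hker.le))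
  refine LinearMap.exists_leftInverse_of_projective_quotient _ fun h₁ h₂ h ↦ ?_
  ext y
  obtain ⟨x, rfl⟩ := hf y
  exact DFunLike.congr_fun h x

end ContinuousMap

/-- The K-groups `KhX = K₀(X)`, `KhY = K₀(Y)`, `KtX = K⁰(X)`, `KtY = K⁰(Y)`, `K1Y = K¹(Y)` are
given abstractly, with the induced maps `fKh = f₊`, `fKt = f^*`, the index pairings `γX`, `γY`,
the consequences of the Rosenberg–Schochet UCT (`hγX`, `huct`), the rank map `rankX` and its
compatibility with `f`; trivial reduced K-theory of `Y` is the isomorphism `rankY`. -/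
theorem stmt6_general (X Y : Type) [MetricSpace X] [CompactSpace X] [MetricSpace Y]
    (f : C(X, Y)) (hf : Function.Surjective f)
    (KhX KhY KtX KtY K1Y : Type)
    [AddCommGroup KhX] [AddCommGroup KhY] [AddCommGroup KtX] [AddCommGroup KtY]
    [AddCommGroup K1Y]
    (fKh : KhX →+ KhY) (fKt : KtY →+ KtX)
    (γX : KhX →+ KtX →+ ℤ) (γY : KhY →+ KtY →+ ℤ)
    (hnat : ∀ (x : KhX) (ξ : KtY), γY (fKh x) ξ = γX x (fKt ξ))
    (hγX : Function.Surjective γX)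
    (huct : HasTrivialExtZ K1Y → Function.Bijective γY)
    (hext : HasTrivialExtZ K1Y)
    (rankY : KtY ≃+ C(Y, ℤ))
    (rankX : KtX →+ C(X, ℤ))
    (hcomp : ∀ ξ : KtY, rankX (fKt ξ) = (rankY ξ).comp f) :
    Function.Surjective fKh := by
  obtain ⟨r, hr⟩ := ContinuousMap.exists_leftInverse_compRight hf
  intro c
  obtain ⟨x, hx⟩ := hγX ((γY c).comp (rankY.symm.toAddMonoidHom.comp
    (r.toAddMonoidHom.comp rankX)))
  refine ⟨x, (huct hext).1 (AddMonoidHom.ext fun ξ ↦ ?_)⟩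
  have hr' : r ((rankY ξ).comp f) = rankY ξ := LinearMap.congr_fun hr (rankY ξ)
  simp [hnat, hx, hcomp, hr']

/-- Let `f : X → Y` be a continuous surjection of compact metric spaces.
The K-homology groups `KhX = K₀(X)`, `KhY = K₀(Y)`, the K-theory groups
`KtX = K⁰(X)`, `KtY = K⁰(Y)` and `K1Y = K¹(Y)` are given abstractly, together with
the induced maps `fKh`, `fKt`, the index pairings `γX`, `γY` (natural with respect to
`f`), the Rosenberg–Schochet UCT facts (`γX` surjective; `γY` bijective provided
`Ext(K¹(Y), ℤ) = 0`), the rank decomposition of `K⁰(X)` with summand `C(X, ℤ)`, and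
its compatibility with `f`.  Hypotheses: `Ext(K¹(Y), ℤ) = 0` and `Y` has trivial
reduced K-theory, i.e. `rankY : K⁰(Y) ≃ C(Y, ℤ)`.  Conclusion: `f₊ : K₀(X) → K₀(Y)`
is surjective. -/
theorem stmt6 (X Y : Type) [MetricSpace X] [CompactSpace X] [MetricSpace Y] [CompactSpace Y]
    (f : C(X, Y)) (hf : Function.Surjective f)
    (KhX KhY KtX KtY K1Y : Type)
    [AddCommGroup KhX] [AddCommGroup KhY] [AddCommGroup KtX] [AddCommGroup KtY]
    [AddCommGroup K1Y]
    (fKh : KhX →+ KhY) (fKt : KtY →+ KtX)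
    (γX : KhX →+ KtX →+ ℤ) (γY : KhY →+ KtY →+ ℤ)
    (hnat : ∀ (x : KhX) (ξ : KtY), γY (fKh x) ξ = γX x (fKt ξ))
    (hγX : Function.Surjective γX)
    (huct : HasTrivialExtZ K1Y → Function.Bijective γY)
    (hext : HasTrivialExtZ K1Y)
    (rankY : KtY ≃+ C(Y, ℤ))
    (rankX : KtX →+ C(X, ℤ)) (dimX : C(X, ℤ) →+ KtX)
    (hsplit : rankX.comp dimX = AddMonoidHom.id C(X, ℤ))
    (hcomp : ∀ ξ : KtY, rankX (fKt ξ) = (rankY ξ).comp f) :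
    Function.Surjective fKh :=
  stmt6_general X Y f hf KhX KhY KtX KtY K1Y fKh fKt γX γY hnat hγX huct hext rankY rankX hcomp
end

section
/- Let H be a separable infinite-dimensional Hilbert space, {eᵢ}_{i∈ℤ} an orthonormal basis, and {zᵢ}_{i∈ℤ} a dense sequence in the unit circle 𝕋 such that Re zᵢ ≠ Re zⱼ for i ≠ j and lim_{i→∞} zᵢ = (1+i)/√2. Define D ∈ B(H) by D eᵢ = 2 Re(zᵢ) eᵢ, and define T by T eᵢ = zᵢ eᵢ for i ≤ 0, and for odd i ≥ 1: T eᵢ = (1/√2) eᵢ + (i/√2) e_{i+1}, T e_{i+1} = (i/√2) eᵢ + (1/√2) e_{i+1}. Then T is unitary and T + T* − D is compact. -/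
/-!
Pair each index `i ≤ 0` with itself and `2k - 1` with `2k` for `k ≥ 1`. On each pair `T` acts by
a symmetric matrix `!![α, β; β, α]` with orthonormal columns (`α = z i`, `β = 0` on singletons;
`α = 1/√2`, `β = i/√2` on pairs), so `T` maps the basis onto an orthonormal family whose span
contains the basis, hence is unitary, and `T*` acts by the conjugate matrix. As `β` is purely
imaginary, `T + T* - D` is diagonal with entries `2 (Re α - Re zᵢ)`, which vanish for `i ≤ 0` and
tend to `0` as `i → ∞` because `Re zᵢ → 1/√2`. A diagonal operator whose entries tend to `0` is a
norm limit of finite-rank ones, hence compact.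
-/

open Filter Topology InnerProductSpace
open scoped ComplexConjugate

namespace HilbertBasis

variable {ι 𝕜 E : Type*} [RCLike 𝕜] [NormedAddCommGroup E] [InnerProductSpace 𝕜 E]
  (b : HilbertBasis ι 𝕜 E)

section Diagonal

variable {A : E →L[𝕜] E} {d : ι → 𝕜}

lemma repr_apply_of_apply_eq_smul (hA : ∀ i, A (b i) = d i • b i) (x : E) (i : ι) :
    b.repr (A x) i = d i * b.repr x i := by
  classical
  have hsum := (b.hasSum_repr x).mapL ((innerSL 𝕜 (b i)).comp A)
  rw [b.repr_apply_apply]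
  refine hsum.unique ?_
  convert hasSum_ite_eq i (d i * b.repr x i) using 1
  ext j
  simp [hA, orthonormal_iff_ite.mp b.orthonormal]
  grind

lemma opNorm_le_of_apply_eq_smul (hA : ∀ i, A (b i) = d i • b i) {ε : ℝ} (hε : 0 ≤ ε)
    (hd : ∀ i, ‖d i‖ ≤ ε) : ‖A‖ ≤ ε := by
  refine A.opNorm_le_bound hε fun x => ?_
  calc ‖A x‖ = ‖b.repr (A x)‖ := (b.repr.norm_map _).symm
    _ ≤ ‖(ε : 𝕜) • b.repr x‖ := lp.norm_mono two_ne_zero fun i => by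
      rw [b.repr_apply_of_apply_eq_smul hA, lp.coeFn_smul, Pi.smul_apply, smul_eq_mul, norm_mul,
        norm_mul, RCLike.norm_ofReal, abs_of_nonneg hε]
      exact mul_le_mul_of_nonneg_right (hd i) (norm_nonneg _)
    _ = ε * ‖x‖ := by rw [norm_smul, RCLike.norm_ofReal, abs_of_nonneg hε, b.repr.norm_map]

lemma sum_rankOne_self_apply (c : ι → 𝕜) (s : Finset ι) (j : ι) :
    (∑ i ∈ s, c i • rankOne 𝕜 (b i) (b i)) (b j) = (s : Set ι).indicator c j • b j := by
  classical
  simp [orthonormal_iff_ite.mp b.orthonormal, Set.indicator_apply]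

lemma isCompactOperator_of_apply_eq_smul [CompleteSpace E] {c : ι → 𝕜}
    (hA : ∀ i, A (b i) = c i • b i) (hc : Tendsto c cofinite (𝓝 0)) : IsCompactOperator A := by
  set F : Finset ι → E →L[𝕜] E := fun s => ∑ i ∈ s, c i • rankOne 𝕜 (b i) (b i)
  have hF : Tendsto F atTop (𝓝 A) := by
    rw [Metric.tendsto_nhds]
    intro ε hε
    have hfin := mem_cofinite.mp (hc (Metric.closedBall_mem_nhds 0 (half_pos hε)))
    filter_upwards [eventually_ge_atTop hfin.toFinset] with s hs
    have hdiag : ∀ j, (A - F s) (b j) = (↑s : Set ι)ᶜ.indicator c j • b j := by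
      intro j
      rw [sub_apply, hA, sum_rankOne_self_apply, ← sub_smul, Set.indicator_compl, Pi.sub_apply]
    have hsmall : ∀ j, ‖(↑s : Set ι)ᶜ.indicator c j‖ ≤ ε / 2 := by
      intro j
      by_cases hj : j ∈ s
      · simp [hj, (half_pos hε).le]
      · simpa [hj] using fun h => hj (hs h)
    rw [dist_eq_norm']
    exact (b.opNorm_le_of_apply_eq_smul hdiag (half_pos hε).le hsmall).trans_lt (half_lt_self hε)
  refine isCompactOperator_of_tendsto hF (Eventually.of_forall fun s => ?_)
  refine (compactOperator (RingHom.id 𝕜) E E).sum_mem fun i _ =>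
    (compactOperator (RingHom.id 𝕜) E E).smul_mem _ ?_
  show IsCompactOperator (rankOne 𝕜 (b i) (b i))
  rw [rankOne_def']
  exact (isCompactOperator_of_locallyCompactSpace_rng
    (ContinuousLinearMap.toSpanSingleton 𝕜 (b i))).comp_clm (innerSL 𝕜 (b i))

end Diagonal

lemma mem_unitary_of_orthonormal [CompleteSpace E] {T : E →L[𝕜] E} (hT : Orthonormal 𝕜 (T ∘ b))
    (hspan : ∀ i, b i ∈ Submodule.span 𝕜 (Set.range (T ∘ b))) : T ∈ unitary (E →L[𝕜] E) := by
  classical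
  have hdense : ⊤ ≤ (Submodule.span 𝕜 (Set.range (T ∘ b))).topologicalClosure := by
    rw [← b.dense_span]
    exact Submodule.topologicalClosure_mono (Submodule.span_le.mpr (Set.range_subset_iff.mpr hspan))
  set U : E ≃ₗᵢ[𝕜] E := b.repr.trans (HilbertBasis.mk hT hdense).repr.symm
  have hTU : T = (U : E →L[𝕜] E) := by
    refine ContinuousLinearMap.ext_on
      (Submodule.dense_iff_topologicalClosure_eq_top.mpr b.dense_span) ?_
    rintro _ ⟨i, rfl⟩
    change T (b i) = U (b i)
    simp only [U, LinearIsometryEquiv.trans_apply, b.repr_self, HilbertBasis.repr_symm_single,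
      HilbertBasis.coe_mk, Function.comp_apply]
  rw [hTU]
  exact (Unitary.linearIsometryEquiv.symm U).2

/-- `T` acts on each orbit `{b i, b (σ i)}` of the involution `σ` by the unitary matrix
`!![α i, β i; β i, α i]`; on a fixed point of `σ` this is multiplication by `α i + β i`. -/
structure IsUnitaryPairBlock (σ : ι → ι) (α β : ι → 𝕜) (T : E →L[𝕜] E) : Prop where
  involutive : Function.Involutive σ
  diag_comp : ∀ i, α (σ i) = α i
  offDiag_comp : ∀ i, β (σ i) = β i
  conj_mul_add : ∀ i, conj (α i) * α i + conj (β i) * β i = 1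
  conj_mul_add_conj_mul : ∀ i, conj (α i) * β i + conj (β i) * α i = 0
  apply_eq : ∀ i, T (b i) = α i • b i + β i • b (σ i)

namespace IsUnitaryPairBlock

variable {b} {σ : ι → ι} {α β : ι → 𝕜} {T : E →L[𝕜] E}

lemma orthonormal (h : b.IsUnitaryPairBlock σ α β T) : Orthonormal 𝕜 (T ∘ b) := by
  classical
  rw [orthonormal_iff_ite]
  intro i j
  simp only [Function.comp_apply, h.apply_eq, inner_add_left, inner_add_right, inner_smul_left,
    inner_smul_right, orthonormal_iff_ite.mp b.orthonormal, h.involutive.injective.eq_iff]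
  by_cases hji : j = i
  · subst hji
    by_cases hσ : σ j = j
    · simp [hσ]
      linear_combination h.conj_mul_add j + h.conj_mul_add_conj_mul j
    · simp [hσ, Ne.symm hσ]
      linear_combination h.conj_mul_add j
  by_cases hjσ : j = σ i
  · subst hjσ
    simp [h.involutive i, h.diag_comp, h.offDiag_comp, Ne.symm hji]
    linear_combination h.conj_mul_add_conj_mul i
  · have : σ j ≠ i := fun hσ => hjσ (by rw [← hσ, h.involutive])
    simp [Ne.symm hji, Ne.symm hjσ, Ne.symm this]

lemma eq_smul_apply_add_smul_apply (h : b.IsUnitaryPairBlock σ α β T) (i : ι) :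
    b i = conj (α i) • T (b i) + conj (β i) • T (b (σ i)) := by
  rw [h.apply_eq, h.apply_eq, h.involutive i, h.diag_comp, h.offDiag_comp]
  linear_combination (norm := module)
    -(h.conj_mul_add i) • b i - (h.conj_mul_add_conj_mul i) • b (σ i)

lemma mem_unitary [CompleteSpace E] (h : b.IsUnitaryPairBlock σ α β T) :
    T ∈ unitary (E →L[𝕜] E) := by
  refine b.mem_unitary_of_orthonormal h.orthonormal fun i => ?_
  rw [h.eq_smul_apply_add_smul_apply i]
  exact add_mem (Submodule.smul_mem _ _ (Submodule.subset_span ⟨i, rfl⟩))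
    (Submodule.smul_mem _ _ (Submodule.subset_span ⟨σ i, rfl⟩))

lemma star_apply [CompleteSpace E] (h : b.IsUnitaryPairBlock σ α β T) (i : ι) :
    star T (b i) = conj (α i) • b i + conj (β i) • b (σ i) := by
  have hTT : ∀ x, star T (T x) = x := fun x =>
    congrArg (· x) (Unitary.star_mul_self_of_mem h.mem_unitary)
  conv_lhs => rw [h.eq_smul_apply_add_smul_apply i]
  simp only [map_add, map_smul, hTT]

lemma add_star_apply [CompleteSpace E] (h : b.IsUnitaryPairBlock σ α β T) (i : ι) :
    (T + star T) (b i) = (α i + conj (α i)) • b i + (β i + conj (β i)) • b (σ i) := by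
  rw [add_apply, h.apply_eq, h.star_apply]
  module

end IsUnitaryPairBlock

end HilbertBasis

def blockPartner (i : ℤ) : ℤ := if i ≤ 0 then i else if Odd i then i + 1 else i - 1

noncomputable def blockDiag (z : ℤ → ℂ) (i : ℤ) : ℂ := if i ≤ 0 then z i else (Real.sqrt 2 : ℂ)⁻¹

noncomputable def blockOffDiag (i : ℤ) : ℂ := if i ≤ 0 then 0 else Complex.I / (Real.sqrt 2 : ℂ)

lemma blockPartner_involutive : Function.Involutive blockPartner := by
  intro i
  simp only [blockPartner, Int.odd_iff]
  split_ifs <;> omega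

lemma blockPartner_nonpos_iff {i : ℤ} : blockPartner i ≤ 0 ↔ i ≤ 0 := by
  simp only [blockPartner, Int.odd_iff]
  split_ifs <;> constructor <;> intro <;> omega

lemma blockPartner_of_odd {i : ℤ} (hi : 1 ≤ i) (hodd : Odd i) : blockPartner i = i + 1 := by
  simp [blockPartner, hodd, show ¬i ≤ 0 by omega]

lemma blockDiag_blockPartner (z : ℤ → ℂ) (i : ℤ) :
    blockDiag z (blockPartner i) = blockDiag z i := by
  by_cases hi : i ≤ 0
  · simp [blockPartner, hi]
  · simp [blockDiag, blockPartner_nonpos_iff, hi]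

lemma blockOffDiag_blockPartner (i : ℤ) : blockOffDiag (blockPartner i) = blockOffDiag i := by
  simp [blockOffDiag, blockPartner_nonpos_iff]

lemma re_blockOffDiag (i : ℤ) : (blockOffDiag i).re = 0 := by
  simp [blockOffDiag, apply_ite Complex.re, Complex.div_ofReal_re]

lemma sqrt_two_inv_mul_self : (Real.sqrt 2 : ℂ)⁻¹ * (Real.sqrt 2 : ℂ)⁻¹ = 2⁻¹ := by
  rw [← mul_inv, ← Complex.ofReal_mul, Real.mul_self_sqrt zero_le_two, Complex.ofReal_ofNat]

lemma conj_blockDiag_mul_add {z : ℤ → ℂ} (hz : ∀ i, ‖z i‖ = 1) (i : ℤ) :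
    conj (blockDiag z i) * blockDiag z i + conj (blockOffDiag i) * blockOffDiag i = 1 := by
  by_cases hi : i ≤ 0
  · simp [blockDiag, blockOffDiag, hi, Complex.conj_mul', hz i]
  · simp only [blockDiag, blockOffDiag, hi, if_false, map_inv₀, map_div₀, Complex.conj_ofReal,
      Complex.conj_I]
    linear_combination (1 - Complex.I * Complex.I) * sqrt_two_inv_mul_self - 2⁻¹ * Complex.I_mul_I

lemma conj_blockDiag_mul_add_conj_mul (z : ℤ → ℂ) (i : ℤ) :
    conj (blockDiag z i) * blockOffDiag i + conj (blockOffDiag i) * blockDiag z i = 0 := by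
  by_cases hi : i ≤ 0
  · simp [blockDiag, blockOffDiag, hi]
  · simp only [blockDiag, blockOffDiag, hi, if_false, map_inv₀, map_div₀, Complex.conj_ofReal,
      Complex.conj_I]
    ring

lemma HilbertBasis.isUnitaryPairBlock_blockPartner {H : Type*} [NormedAddCommGroup H]
    [InnerProductSpace ℂ H] (e : HilbertBasis ℤ ℂ H) {z : ℤ → ℂ} (hz : ∀ i, ‖z i‖ = 1)
    {T : H →L[ℂ] H} (hT0 : ∀ i : ℤ, i ≤ 0 → T (e i) = z i • e i)
    (hT1 : ∀ i : ℤ, 1 ≤ i → Odd i →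
      T (e i) = ((Real.sqrt 2 : ℂ))⁻¹ • e i + (Complex.I / (Real.sqrt 2 : ℂ)) • e (i + 1) ∧
      T (e (i + 1)) =
        (Complex.I / (Real.sqrt 2 : ℂ)) • e i + ((Real.sqrt 2 : ℂ))⁻¹ • e (i + 1)) :
    e.IsUnitaryPairBlock blockPartner (blockDiag z) blockOffDiag T where
  involutive := blockPartner_involutive
  diag_comp := blockDiag_blockPartner z
  offDiag_comp := blockOffDiag_blockPartner
  conj_mul_add := conj_blockDiag_mul_add hz
  conj_mul_add_conj_mul := conj_blockDiag_mul_add_conj_mul z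
  apply_eq i := by
    rcases le_or_gt i 0 with hi | hi
    · simp [blockDiag, blockOffDiag, blockPartner, hi, hT0 i hi]
    rcases Int.even_or_odd i with heven | hodd
    · obtain ⟨j, rfl⟩ : ∃ j, i = j + 1 := ⟨i - 1, by ring⟩
      have hodd : Odd j := by simpa [Int.even_add_one] using heven
      have hj : 1 ≤ j := by rcases hodd with ⟨m, rfl⟩; omega
      have hpartner : blockPartner (j + 1) = j := by
        rw [← blockPartner_of_odd hj hodd, blockPartner_involutive]
      simp only [blockDiag, blockOffDiag, not_le.mpr hi, if_false, hpartner, (hT1 j hj hodd).2,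
        add_comm]
    · simp only [blockDiag, blockOffDiag, not_le.mpr hi, if_false, blockPartner_of_odd hi hodd,
        (hT1 i hi hodd).1]

lemma tendsto_re_blockDiag_sub_re {z : ℤ → ℂ}
    (hz : Tendsto z atTop (𝓝 ((1 + Complex.I) / (Real.sqrt 2 : ℂ)))) :
    Tendsto (fun i => (blockDiag z i).re - (z i).re) cofinite (𝓝 0) := by
  rw [Int.cofinite_eq, tendsto_sup]
  constructor
  · refine tendsto_const_nhds.congr' ?_
    filter_upwards [eventually_le_atBot 0] with i hi
    simp [blockDiag, hi]
  · have hre : ((1 + Complex.I) / (Real.sqrt 2 : ℂ)).re = (Real.sqrt 2)⁻¹ := by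
      simp [Complex.div_ofReal_re]
    have hlim := (Complex.continuous_re.tendsto _).comp hz
    rw [hre] at hlim
    have := (tendsto_const_nhds (x := (Real.sqrt 2)⁻¹)).sub hlim
    rw [sub_self] at this
    refine this.congr' ?_
    filter_upwards [eventually_gt_atTop 0] with i hi
    simp [blockDiag, not_le.mpr hi, ← Complex.ofReal_inv]

theorem stmt8_general (H : Type*) [NormedAddCommGroup H] [InnerProductSpace ℂ H] [CompleteSpace H]
    (e : HilbertBasis ℤ ℂ H)
    (z : ℤ → ℂ) (hz1 : ∀ i, ‖z i‖ = 1)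
    (hzlim : Filter.Tendsto z Filter.atTop
      (nhds ((1 + Complex.I) / (Real.sqrt 2 : ℂ))))
    (D T : H →L[ℂ] H)
    (hD : ∀ i : ℤ, D (e i) = ((2 * (z i).re : ℝ) : ℂ) • e i
)
    (hT0 : ∀ i : ℤ, i ≤ 0 → T (e i) = z i • e i)
    (hT1 : ∀ i : ℤ, 1 ≤ i → Odd i →
      T (e i) = ((Real.sqrt 2 : ℂ))⁻¹ • e i + (Complex.I / (Real.sqrt 2 : ℂ)) • e (i + 1) ∧
      T (e (i + 1)) =
        (Complex.I / (Real.sqrt 2 : ℂ)) • e i + ((Real.sqrt 2 : ℂ))⁻¹ • e (i + 1)) :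
    T ∈ unitary (H →L[ℂ] H) ∧ IsCompactOperator ⇑(T + star T - D) := by
  have hblock := e.isUnitaryPairBlock_blockPartner hz1 hT0 hT1
  have hcoeff : Tendsto (fun i => ((2 * ((blockDiag z i).re - (z i).re) : ℝ) : ℂ)) cofinite
      (𝓝 0) := by
    have := (tendsto_re_blockDiag_sub_re hzlim).const_mul 2
    rw [mul_zero] at this
    exact (Complex.continuous_ofReal.tendsto' 0 0 Complex.ofReal_zero).comp this
  refine ⟨hblock.mem_unitary, e.isCompactOperator_of_apply_eq_smul (fun i => ?_) hcoeff⟩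
  rw [sub_apply, hblock.add_star_apply, hD, Complex.add_conj, Complex.add_conj, re_blockOffDiag]
  push_cast
  module

/-- With `{eᵢ}_{i∈ℤ}` an orthonormal basis of a separable Hilbert space,
`{zᵢ}` a dense sequence in the unit circle with pairwise distinct real parts and
`zᵢ → (1+i)/√2`, the operators `D eᵢ = 2 Re(zᵢ) eᵢ` and `T` (given by `T eᵢ = zᵢ eᵢ` for
`i ≤ 0` and 2×2 rotation blocks `((1/√2, i/√2),(i/√2, 1/√2))` on `(eᵢ, eᵢ₊₁)` for odd
`i ≥ 1`) satisfy: `T` is unitary and `T + T* − D` is compact. -/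
theorem stmt8 (H : Type*) [NormedAddCommGroup H] [InnerProductSpace ℂ H] [CompleteSpace H]
    [TopologicalSpace.SeparableSpace H]
    (e : HilbertBasis ℤ ℂ H)
    (z : ℤ → ℂ) (hz1 : ∀ i, ‖z i‖ = 1)
    (hzdense : ∀ w : ℂ, ‖w‖ = 1 → w ∈ closure (Set.range z))
    (hzre : Function.Injective fun i => (z i).re)
    (hzlim : Filter.Tendsto z Filter.atTop
      (nhds ((1 + Complex.I) / (Real.sqrt 2 : ℂ))))
    (D T : H →L[ℂ] H)
    (hD : ∀ i : ℤ, D (e i) = ((2 * (z i).re : ℝ) : ℂ) • e i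
)
    (hT0 : ∀ i : ℤ, i ≤ 0 → T (e i) = z i • e i)
    (hT1 : ∀ i : ℤ, 1 ≤ i → Odd i →
      T (e i) = ((Real.sqrt 2 : ℂ))⁻¹ • e i + (Complex.I / (Real.sqrt 2 : ℂ)) • e (i + 1) ∧
      T (e (i + 1)) =
        (Complex.I / (Real.sqrt 2 : ℂ)) • e i + ((Real.sqrt 2 : ℂ))⁻¹ • e (i + 1)) :
    T ∈ unitary (H →L[ℂ] H) ∧ IsCompactOperator ⇑(T + star T - D) :=
  stmt8_general H e z hz1 hzlim D T hD hT0 hT1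
end

section
/- With D and T as in the counterexample construction (T unitary with σ(T) = 𝕋, T + T* − D compact, D diagonal with distinct real eigenvalues 2Re zᵢ), there exists no normal operator N with N + N* = D and N − T compact. -/
/-!
Since `N` is normal, `D = N + N*` is self-adjoint and commutes with `N`; as `D` is diagonal in the
basis `e` with pairwise distinct eigenvalues, `N` is diagonal too. Hence the `(2k+2, 2k+1)` matrix
entry of `N - T` is `-i/√2` for every `k`, whereas for a compact operator `K`, an orthonormal
sequence `uₖ` and a bounded sequence `wₖ`, the entries `⟪uₖ, K wₖ⟫` tend to `0`.
-/

open Filter Topology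
open scoped InnerProductSpace

section

variable {𝕜 H ι : Type*} [RCLike 𝕜] [NormedAddCommGroup H] [InnerProductSpace 𝕜 H]

theorem Orthonormal.tendsto_inner_cofinite_zero {v : ι → H} (hv : Orthonormal 𝕜 v) (x : H) :
    Tendsto (fun i => ⟪v i, x⟫_𝕜) cofinite (𝓝 0) := by
  have hsq := (hv.inner_products_summable x).tendsto_cofinite_zero.sqrt
  rw [Real.sqrt_zero] at hsq
  rw [tendsto_zero_iff_norm_tendsto_zero]
  exact hsq.congr fun i => Real.sqrt_sq (norm_nonneg _)

theorem inner_apply_eq_zero_of_commute [CompleteSpace H] {D N : H →L[𝕜] H}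
    (hD : IsSelfAdjoint D) (hDN : Commute D N) {v : ι → H} {d : ι → ℝ}
    (hv : ∀ i, D (v i) = (d i : 𝕜) • v i) {i j : ι} (hij : d i ≠ d j) :
    ⟪v i, N (v j)⟫_𝕜 = 0 := by
  have key : (d i : 𝕜) * ⟪v i, N (v j)⟫_𝕜 = (d j : 𝕜) * ⟪v i, N (v j)⟫_𝕜 := calc
    (d i : 𝕜) * ⟪v i, N (v j)⟫_𝕜 = ⟪D (v i), N (v j)⟫_𝕜 := by
      rw [hv, inner_smul_left, RCLike.conj_ofReal]
    _ = ⟪v i, D (N (v j))⟫_𝕜 := hD.isSymmetric (v i) (N (v j))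
    _ = ⟪v i, N (D (v j))⟫_𝕜 :=
      congrArg (fun A : H →L[𝕜] H => ⟪v i, A (v j)⟫_𝕜) hDN.eq
    _ = (d j : 𝕜) * ⟪v i, N (v j)⟫_𝕜 := by rw [hv, map_smul, inner_smul_right]
  by_contra h
  exact hij (by exact_mod_cast mul_right_cancel₀ h key)

theorem IsCompactOperator.tendsto_inner_apply_of_orthonormal {E : Type*} [NormedAddCommGroup E]
    [NormedSpace 𝕜 E] {f : E →ₗ[𝕜] H} (hf : IsCompactOperator f) {u : ℕ → H}
    (hu : Orthonormal 𝕜 u) {w : ℕ → E} (hw : Bornology.IsBounded (Set.range w)) :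
    Tendsto (fun n => ⟪u n, f (w n)⟫_𝕜) atTop (𝓝 0) := by
  refine tendsto_of_subseq_tendsto fun ns hns => ?_
  obtain ⟨a, -, φ, hφ, hlim⟩ := (hf.isCompact_closure_image_of_bounded hw).tendsto_subseq
    (x := fun n => f (w (ns n))) fun n => subset_closure ⟨w (ns n), ⟨ns n, rfl⟩, rfl⟩
  have hcompact_part : Tendsto (fun n => ⟪u (ns (φ n)), f (w (ns (φ n))) - a⟫_𝕜) atTop (𝓝 0) := by
    refine squeeze_zero_norm (fun n => ?_) (tendsto_iff_norm_sub_tendsto_zero.mp hlim)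
    exact (norm_inner_le_norm _ _).trans_eq (by rw [hu.1, one_mul]; rfl)
  have hbessel_part : Tendsto (fun n => ⟪u (ns (φ n)), a⟫_𝕜) atTop (𝓝 0) :=
    ((hu.tendsto_inner_cofinite_zero a).mono_left Nat.cofinite_eq_atTop.ge).comp
      (hns.comp hφ.tendsto_atTop)
  refine ⟨φ, ?_⟩
  simpa only [← inner_add_right, sub_add_cancel, add_zero] using hcompact_part.add hbessel_part

end

theorem stmt10_general (H : Type*) [NormedAddCommGroup H] [InnerProductSpace ℂ H] [CompleteSpace H]
    (e : HilbertBasis ℤ ℂ H)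
    (z : ℤ → ℂ)
    (hzre : Function.Injective fun i => (z i).re)
    (D T : H →L[ℂ] H)
    (hD : ∀ i : ℤ, D (e i) = ((2 * (z i).re : ℝ) : ℂ) • e i)
    (hT1 : ∀ i : ℤ, 1 ≤ i → Odd i →
      T (e i) = ((Real.sqrt 2 : ℂ))⁻¹ • e i + (Complex.I / (Real.sqrt 2 : ℂ)) • e (i + 1) ∧
      T (e (i + 1)) =
        (Complex.I / (Real.sqrt 2 : ℂ)) • e i + ((Real.sqrt 2 : ℂ))⁻¹ • e (i + 1)) :
    ¬ ∃ N : H →L[ℂ] H,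
        N * star N = star N * N ∧ N + star N = D ∧ IsCompactOperator ⇑(N - T) := by
  rintro ⟨N, hN, hND, hNT⟩
  have hDsa : IsSelfAdjoint D := hND ▸ IsSelfAdjoint.add_star_self N
  have hDN : Commute D N := hND ▸ (Commute.refl N).add_left hN.symm
  have hentry (k : ℕ) :
      ⟪e (2 * k + 1 + 1), (N - T) (e (2 * k + 1))⟫_ℂ = -(Complex.I / (Real.sqrt 2 : ℂ)) := by
    have hN0 : ⟪e (2 * k + 1 + 1), N (e (2 * k + 1))⟫_ℂ = 0 :=
      inner_apply_eq_zero_of_commute hDsa hDN hD fun h =>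
        absurd (hzre (mul_left_cancel₀ two_ne_zero h)) (by omega)
    rw [sub_apply, inner_sub_right, hN0, (hT1 _ (by omega) ⟨k, rfl⟩).1,
      inner_add_right, inner_smul_right, inner_smul_right]
    simp [orthonormal_iff_ite.mp e.orthonormal, e.orthonormal.1]
  have hlim := hNT.tendsto_inner_apply_of_orthonormal (f := ((N - T : H →L[ℂ] H) : H →ₗ[ℂ] H))
    (u := fun k : ℕ => e (2 * k + 1 + 1)) (e.orthonormal.comp _ fun k l h => by simpa using h)
    (w := fun k : ℕ => e (2 * k + 1)) (Metric.isBounded_sphere.subset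
      (Set.range_subset_iff.2 fun k => mem_sphere_zero_iff_norm.2 (e.orthonormal.1 _)))
  have hI : -(Complex.I / (Real.sqrt 2 : ℂ)) ≠ 0 := by simp
  exact hI (tendsto_nhds_unique tendsto_const_nhds (hlim.congr hentry))

/-- With `D` and `T` as in the counterexample construction
(`{eᵢ}_{i∈ℤ}` an orthonormal basis, `{zᵢ}` dense in the circle with distinct real
parts and limit `(1+i)/√2`, `D eᵢ = 2 Re(zᵢ) eᵢ`, `T` unitary with `σ(T) = 𝕋` acting
diagonally for `i ≤ 0` and by rotation blocks on pairs `(eᵢ, eᵢ₊₁)` for odd `i ≥ 1`,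
and `T + T* − D` compact), there is no normal operator `N` with `N + N* = D` and
`N − T` compact. -/
theorem stmt10 (H : Type*) [NormedAddCommGroup H] [InnerProductSpace ℂ H] [CompleteSpace H]
    [TopologicalSpace.SeparableSpace H]
    (e : HilbertBasis ℤ ℂ H)
    (z : ℤ → ℂ) (hz1 : ∀ i, ‖z i‖ = 1)
    (hzdense : ∀ w : ℂ, ‖w‖ = 1 → w ∈ closure (Set.range z))
    (hzre : Function.Injective fun i => (z i).re)
    (hzlim : Filter.Tendsto z Filter.atTop
      (nhds ((1 + Complex.I) / (Real.sqrt 2 : ℂ))))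
    (D T : H →L[ℂ] H)
    (hD : ∀ i : ℤ, D (e i) = ((2 * (z i).re : ℝ) : ℂ) • e i)
    (hT0 : ∀ i : ℤ, i ≤ 0 → T (e i) = z i • e i)
    (hT1 : ∀ i : ℤ, 1 ≤ i → Odd i →
      T (e i) = ((Real.sqrt 2 : ℂ))⁻¹ • e i + (Complex.I / (Real.sqrt 2 : ℂ)) • e (i + 1) ∧
      T (e (i + 1)) =
        (Complex.I / (Real.sqrt 2 : ℂ)) • e i + ((Real.sqrt 2 : ℂ))⁻¹ • e (i + 1))
    (hTu : T ∈ unitary (H →L[ℂ] H))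
    (hσT : spectrum ℂ T = {w : ℂ | ‖w‖ = 1})
    (hTD : IsCompactOperator ⇑(T + star T - D)) :
    ¬ ∃ N : H →L[ℂ] H,
        N * star N = star N * N ∧ N + star N = D ∧ IsCompactOperator ⇑(N - T) :=
  stmt10_general H e z hzre D T hD hT1
end

section
/- Let σ₁, σ₂ : ℕ → ℕ be injections with disjoint ranges whose union is ℕ, let {χᵢ}_{i≥1} be an orthonormal family in H, let P be the orthogonal projection onto the closed span of the χᵢ, let V : PH → H be the isometry with V χᵢ = χ_{σ₁(i)}, and set S = P^⊥ + V P. Then S is an isometry of H with range H ⊖ span{χ_{σ₂(i)} : i ≥ 1}, and if T : H → H is the isometry with T eᵢ = χ_{σ₂(i)} for an orthonormal basis {eᵢ}, then S S* + T T* = 1. -/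
/-!
`S` fixes the orthogonal complement of `K = closure (span {χᵢ})` and maps `K` isometrically
into itself, so it is an isometry. Its range is closed and equals
`closure (span {χ_{σ₁(i)}}) ⊕ Kᗮ`; as `σ₁` and `σ₂` partition `ℕ`, this is exactly the orthogonal
complement of `span {χ_{σ₂(i)}}`. Since `T` sends a Hilbert basis onto the `χ_{σ₂(i)}`, that
complement is also `ker T* = (range T)ᗮ`, and two isometries whose ranges are orthogonal
complements of each other satisfy `S S* + T T* = 1`.
-/

section

open Submodule ContinuousLinearMap
open scoped InnerProductSpace

variable {𝕜 E F ι : Type*} [RCLike 𝕜] [NormedAddCommGroup E] [InnerProductSpace 𝕜 E]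
  [NormedAddCommGroup F] [InnerProductSpace 𝕜 F]

theorem Submodule.mem_orthogonal_span_range_iff {v : ι → E} {x : E} :
    x ∈ (span 𝕜 (Set.range v))ᗮ ↔ ∀ i, ⟪v i, x⟫_𝕜 = 0 := by
  rw [← span_singleton_le_iff_mem, ← isOrtho_iff_le, isOrtho_comm, isOrtho_span]
  simp

theorem ContinuousLinearMap.mapsTo_topologicalClosure_span_range {A : E →L[𝕜] F} {v : ι → E}
    {w : ι → F} (hAv : A ∘ v = w) :
    Set.MapsTo A (span 𝕜 (Set.range v)).topologicalClosure
      (span 𝕜 (Set.range w)).topologicalClosure := by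
  intro x hx
  subst hAv
  rw [Set.range_comp, ← A.coe_coe, ← map_span]
  exact topologicalClosure_map A _ ⟨x, hx, rfl⟩

theorem Orthonormal.norm_map_of_mem_topologicalClosure_span {v : ι → E} (hv : Orthonormal 𝕜 v)
    {A : E →L[𝕜] F} (hAv : Orthonormal 𝕜 (A ∘ v)) {x : E}
    (hx : x ∈ (span 𝕜 (Set.range v)).topologicalClosure) : ‖A x‖ = ‖x‖ := by
  have hspan : ∀ y ∈ span 𝕜 (Set.range v), ‖A y‖ = ‖y‖ := by
    intro y hy
    obtain ⟨c, rfl⟩ := Finsupp.mem_span_range_iff_exists_finsupp.mp hy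
    rw [← Finsupp.linearCombination_apply, ← A.coe_coe, Finsupp.apply_linearCombination,
      A.coe_coe, @norm_eq_sqrt_re_inner 𝕜, @norm_eq_sqrt_re_inner 𝕜,
      hAv.inner_finsupp_eq_sum_left, hv.inner_finsupp_eq_sum_left]
  exact Set.EqOn.closure hspan (by fun_prop) continuous_norm hx

theorem HilbertBasis.norm_map_of_orthonormal_comp (b : HilbertBasis ι 𝕜 E) {A : E →L[𝕜] F}
    (hAb : Orthonormal 𝕜 (A ∘ b)) (x : E) : ‖A x‖ = ‖x‖ :=
  b.orthonormal.norm_map_of_mem_topologicalClosure_span hAb (b.dense_span ▸ mem_top)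

theorem HilbertBasis.ker_adjoint_eq_orthogonal [CompleteSpace E] [CompleteSpace F]
    (b : HilbertBasis ι 𝕜 E) (A : E →L[𝕜] F) :
    (adjoint A).ker = (span 𝕜 (Set.range (A ∘ b)))ᗮ := by
  have hb : (span 𝕜 (Set.range b))ᗮ = ⊥ := topologicalClosure_eq_top_iff.mp b.dense_span
  ext y
  rw [LinearMap.mem_ker, mem_orthogonal_span_range_iff, ← mem_bot 𝕜, ← hb,
    mem_orthogonal_span_range_iff]
  simp [adjoint_inner_right]

theorem ContinuousLinearMap.norm_map_of_mapsTo_of_fixes_orthogonal (K : Submodule 𝕜 E)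
    [K.HasOrthogonalProjection] {S : E →L[𝕜] E} (hK : Set.MapsTo S K K)
    (hnorm : ∀ x ∈ K, ‖S x‖ = ‖x‖) (hKperp : ∀ x ∈ Kᗮ, S x = x) (x : E) :
    ‖S x‖ = ‖x‖ := by
  obtain ⟨y, hy, z, hz, rfl⟩ := K.exists_add_mem_mem_orthogonal x
  have pythagoras : ∀ w ∈ K, ‖w + z‖ = √(‖w‖ * ‖w‖ + ‖z‖ * ‖z‖) := fun w hw => by
    rw [← norm_add_sq_eq_norm_sq_add_norm_sq_of_inner_eq_zero w z
      (inner_right_of_mem_orthogonal hw hz), Real.sqrt_mul_self (norm_nonneg _)]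
  rw [map_add, hKperp z hz, pythagoras _ (hK hy), pythagoras _ hy, hnorm y hy]

theorem ContinuousLinearMap.isClosed_range_of_star_mul_self_eq_one [CompleteSpace E]
    {S : E →L[𝕜] E} (hS : star S * S = 1) : IsClosed (S.range : Set E) :=
  ((S.isometry_iff_adjoint_comp_self).mpr hS).isClosedEmbedding.isClosed_range

theorem ContinuousLinearMap.mul_star_add_mul_star_eq_one [CompleteSpace E] {S T : E →L[𝕜] E}
    (hS : star S * S = 1) (hT : star T * T = 1) (hST : S.range = T.rangeᗮ) :
    S * star S + T * star T = 1 := by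
  have : CompleteSpace T.range := (isClosed_range_of_star_mul_self_eq_one hT).completeSpace_coe
  ext x
  obtain ⟨_, ⟨w, rfl⟩, a, ha, rfl⟩ := T.range.exists_add_mem_mem_orthogonal x
  obtain ⟨u, rfl⟩ : a ∈ S.range := by rwa [hST]
  have hTS : star T (S u) = 0 := by
    rw [orthogonal_range] at ha
    exact ha
  have hST : star S (T w) = 0 := by
    have : T w ∈ S.rangeᗮ := hST ▸ le_orthogonal_orthogonal _ ⟨w, rfl⟩
    rw [orthogonal_range] at this
    exact this
  have hSS : star S (S u) = u := by simpa using congr($hS u)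
  have hTT : star T (T w) = w := by simpa using congr($hT w)
  simp [hTS, hST, hSS, hTT, add_comm]

section OrthonormalShift

variable [CompleteSpace E] {κ : Type*} {v : ι → E} {σ₁ : ι → ι} {σ₂ : κ → ι} {S : E →L[𝕜] E}

theorem ContinuousLinearMap.norm_map_of_orthonormal_shift (hv : Orthonormal 𝕜 v)
    (hσ₁ : σ₁.Injective) (hSv : S ∘ v = v ∘ σ₁)
    (hSfix : ∀ x ∈ (span 𝕜 (Set.range v))ᗮ, S x = x) (x : E) : ‖S x‖ = ‖x‖ := by
  have hKperp := (span 𝕜 (Set.range v)).orthogonal_closure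
  refine norm_map_of_mapsTo_of_fixes_orthogonal (span 𝕜 (Set.range v)).topologicalClosure
    (fun y hy => ?_) (fun y hy => ?_) (fun y hy => hSfix y (hKperp ▸ hy)) x
  · have hσ₁v : span 𝕜 (Set.range (v ∘ σ₁)) ≤ span 𝕜 (Set.range v) :=
      span_mono (Set.range_comp_subset_range σ₁ v)
    exact topologicalClosure_mono hσ₁v (S.mapsTo_topologicalClosure_span_range hSv hy)
  · exact hv.norm_map_of_mem_topologicalClosure_span (hSv ▸ hv.comp σ₁ hσ₁) hy

theorem ContinuousLinearMap.range_eq_orthogonal_of_orthonormal_shift (hv : Orthonormal 𝕜 v)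
    (hσ₁ : σ₁.Injective) (hdisj : ∀ i j, σ₁ i ≠ σ₂ j)
    (hcover : ∀ n, (∃ i, σ₁ i = n) ∨ ∃ j, σ₂ j = n) (hSv : S ∘ v = v ∘ σ₁)
    (hSfix : ∀ x ∈ (span 𝕜 (Set.range v))ᗮ, S x = x) :
    S.range = (span 𝕜 (Set.range (v ∘ σ₂)))ᗮ := by
  set A := span 𝕜 (Set.range (v ∘ σ₁))
  set B := span 𝕜 (Set.range (v ∘ σ₂))
  set C := span 𝕜 (Set.range v)
  have hAB : A ≤ Bᗮ := isOrtho_span.mpr <| by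
    rintro _ ⟨i, rfl⟩ _ ⟨j, rfl⟩
    exact hv.inner_eq_zero (hdisj i j)
  have hBC : B ≤ C := span_mono (Set.range_comp_subset_range σ₂ v)
  have hABC : Aᗮ ⊓ Bᗮ ≤ Cᗮ := by
    rw [inf_orthogonal]
    refine orthogonal_le (span_le.mpr ?_)
    rintro _ ⟨n, rfl⟩
    rcases hcover n with ⟨i, rfl⟩ | ⟨j, rfl⟩
    · exact mem_sup_left (subset_span ⟨i, rfl⟩)
    · exact mem_sup_right (subset_span ⟨j, rfl⟩)
  have hS : star S * S = 1 :=
    (norm_map_iff_adjoint_comp_self S).mp (norm_map_of_orthonormal_shift hv hσ₁ hSv hSfix)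
  have hAS : A.topologicalClosure ≤ S.range := by
    refine topologicalClosure_minimal _ (span_le.mpr ?_)
      (isClosed_range_of_star_mul_self_eq_one hS)
    rintro _ ⟨i, rfl⟩
    exact ⟨v i, congr_fun hSv i⟩
  have hAclB : A.topologicalClosure ≤ Bᗮ :=
    topologicalClosure_minimal _ hAB B.isClosed_orthogonal
  apply le_antisymm
  · rintro _ ⟨x, rfl⟩
    obtain ⟨y, hy, z, hz, rfl⟩ := C.topologicalClosure.exists_add_mem_mem_orthogonal x
    rw [orthogonal_closure] at hz
    rw [coe_coe, map_add, hSfix z hz]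
    exact add_mem (hAclB (S.mapsTo_topologicalClosure_span_range hSv hy)) (orthogonal_le hBC hz)
  · intro x hx
    obtain ⟨y, hy, z, hz, rfl⟩ := A.topologicalClosure.exists_add_mem_mem_orthogonal x
    rw [orthogonal_closure] at hz
    have hzB : z ∈ Bᗮ := by simpa using sub_mem hx (hAclB hy)
    exact add_mem (hAS hy) ⟨z, hSfix z (hABC ⟨hz, hzB⟩)⟩

end OrthonormalShift

end

theorem stmt14_general (H : Type*) [NormedAddCommGroup H] [InnerProductSpace ℂ H] [CompleteSpace H]
    (σ₁ σ₂ : ℕ → ℕ) (h1 : Function.Injective σ₁) (h2 : Function.Injective σ₂)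
    (hdisj : ∀ i j, σ₁ i ≠ σ₂ j)
    (hcover : ∀ n : ℕ, (∃ i, σ₁ i = n) ∨ ∃ i, σ₂ i = n)
    (χ : ℕ → H) (hχ : Orthonormal ℂ χ)
    (P : H →L[ℂ] H)
    (hPker : ∀ ξ : H, (∀ i, (inner ℂ (χ i) ξ : ℂ) = 0) → P ξ = 0)
    (S : H →L[ℂ] H) (hSχ : ∀ i, S (χ i) = χ (σ₁ i)) (hSperp : ∀ ξ, P ξ = 0 → S ξ = ξ)
    (e : HilbertBasis ℕ ℂ H)
    (T : H →L[ℂ] H) (hT : ∀ i, T (e i) = χ (σ₂ i)) :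
    star S * S = 1 ∧ star T * T = 1 ∧
    Set.range ⇑S = ((Submodule.span ℂ (Set.range fun i => χ (σ₂ i)))ᗮ : Set H) ∧
    S * star S + T * star T = 1 := by
  have hSshift : S ∘ χ = χ ∘ σ₁ := funext hSχ
  have hTe : T ∘ e = χ ∘ σ₂ := funext hT
  have hSfix : ∀ x ∈ (Submodule.span ℂ (Set.range χ))ᗮ, S x = x := fun x hx =>
    hSperp x (hPker x (Submodule.mem_orthogonal_span_range_iff.mp hx))
  have hSiso : star S * S = 1 :=
    S.norm_map_iff_adjoint_comp_self.mp (S.norm_map_of_orthonormal_shift hχ h1 hSshift hSfix)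
  have hTiso : star T * T = 1 :=
    T.norm_map_iff_adjoint_comp_self.mp (e.norm_map_of_orthonormal_comp (hTe ▸ hχ.comp σ₂ h2))
  have hrange : S.range = (Submodule.span ℂ (Set.range (χ ∘ σ₂)))ᗮ :=
    S.range_eq_orthogonal_of_orthonormal_shift hχ h1 hdisj hcover hSshift hSfix
  refine ⟨hSiso, hTiso, congrArg SetLike.coe hrange,
    ContinuousLinearMap.mul_star_add_mul_star_eq_one hSiso hTiso ?_⟩
  rw [hrange, ContinuousLinearMap.orthogonal_range, e.ker_adjoint_eq_orthogonal, hTe]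

/-- Let `σ₁, σ₂ : ℕ → ℕ` be injections with disjoint ranges covering `ℕ`,
`{χᵢ}` an orthonormal family in `H`, `P` the orthogonal projection onto the closed span
of the `χᵢ`, `S = P^⊥ + V P` where `V χᵢ = χ_{σ₁(i)}`, and `T` the isometry with
`T eᵢ = χ_{σ₂(i)}` for an orthonormal basis `{eᵢ}`.  Then `S` and `T` are isometries,
the range of `S` is the orthogonal complement of `span{χ_{σ₂(i)}}`, and
`S S* + T T* = 1`. -/
theorem stmt14 (H : Type*) [NormedAddCommGroup H] [InnerProductSpace ℂ H] [CompleteSpace H]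
    (σ₁ σ₂ : ℕ → ℕ) (h1 : Function.Injective σ₁) (h2 : Function.Injective σ₂)
    (hdisj : ∀ i j, σ₁ i ≠ σ₂ j)
    (hcover : ∀ n : ℕ, (∃ i, σ₁ i = n) ∨ ∃ i, σ₂ i = n)
    (χ : ℕ → H) (hχ : Orthonormal ℂ χ)
    (P : H →L[ℂ] H) (hPidem : P * P = P) (hPsa : IsSelfAdjoint P)
    (hPfix : ∀ i, P (χ i) = χ i)
    (hPker : ∀ ξ : H, (∀ i, (inner ℂ (χ i) ξ : ℂ) = 0) → P ξ = 0)
    (S : H →L[ℂ] H) (hSχ : ∀ i, S (χ i) = χ (σ₁ i)) (hSperp : ∀ ξ, P ξ = 0 → S ξ = ξ)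
    (e : HilbertBasis ℕ ℂ H)
    (T : H →L[ℂ] H) (hT : ∀ i, T (e i) = χ (σ₂ i)) :
    star S * S = 1 ∧ star T * T = 1 ∧
    Set.range ⇑S = ((Submodule.span ℂ (Set.range fun i => χ (σ₂ i)))ᗮ : Set H) ∧
    S * star S + T * star T = 1 :=
  stmt14_general H σ₁ σ₂ h1 h2 hdisj hcover χ hχ P hPker S hSχ hSperp e T hT
end
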